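/- Let C be a linear operator on H_out ⊗ H_in (finite-dimensional) such that Tr[C·E] = 1 for every positive semidefinite operator E on H_out ⊗ H_in with Tr_{H_out}[E] = I_{H_in}. Then C = I_{H_out} ⊗ ρ for some operator ρ on H_in with Tr[ρ] = 1. Moreover if C is positive semidefinite then so is ρ. -/

import Mathlib

/-!
The map `E ↦ Tr[C E]` is affine and equal to `1` on the convex set of channel Choi matrices,
which contains the positive definite matrix `1 / card o`. From that point one can move a short
distance in any Hermitian direction `H` with `Tr_out H = 0` without leaving the set, so
`Tr[C H] = 0`; splitting into Hermitian and anti-Hermitian parts, `Tr[C X] = 0` on the whole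
kernel of the partial trace. Testing this on matrix units in the kernel (entries of off-diagonal
blocks, and differences of the same entry in two diagonal blocks) gives `C = 1 ⊗ ρ` with `ρ` a
diagonal block of `C`. Then `Tr C = card o` forces `Tr ρ = 1`, and `ρ`, a principal submatrix
of `C`, is positive semidefinite whenever `C` is.
-/

open Matrix Kronecker BigOperators ComplexOrder

/-- Partial trace over the first tensor factor. -/
noncomputable def ptrFst {o i : Type*} [Fintype o] (M : Matrix (o × i) (o × i) ℂ) :
    Matrix i i ℂ :=
  Matrix.of fun a b => ∑ k, M (k, a) (k, b)

/-- Partial trace over the second tensor factor. -/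
noncomputable def ptrSnd {o i : Type*} [Fintype i] (M : Matrix (o × i) (o × i) ℂ) :
    Matrix o o ℂ :=
  Matrix.of fun a b => ∑ k, M (a, k) (b, k)

/-- Choi operator of a linear map between matrix algebras. -/
noncomputable def choi {i o : Type*} [Fintype i] [DecidableEq i]
    (E : Matrix i i ℂ →ₗ[ℂ] Matrix o o ℂ) : Matrix (o × i) (o × i) ℂ :=
  ∑ m, ∑ n, (E (Matrix.single m n 1)) ⊗ₖ (Matrix.single m n 1)

/-- Complete positivity, expressed via existence of a Kraus decomposition
(equivalent to the usual definition in finite dimensions). -/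
def IsCP {i o : Type*} [Fintype i] [Fintype o]
    (E : Matrix i i ℂ →ₗ[ℂ] Matrix o o ℂ) : Prop :=
  ∃ (k : ℕ) (K : Fin k → Matrix o i ℂ), ∀ X, E X = ∑ j, K j * X * (K j)ᴴ

open scoped MatrixOrder Matrix.Norms.L2Operator in
theorem Matrix.IsHermitian.exists_pos_posSemidef_smul_one_add {n : Type*} [Fintype n]
    [DecidableEq n] {H : Matrix n n ℂ} (hH : H.IsHermitian) :
    ∃ s : ℝ, 0 < s ∧ ((s : ℂ) • 1 + H).PosSemidef := by
  have h : -(algebraMap ℝ (Matrix n n ℂ) ‖H‖) ≤ H :=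
    hH.isSelfAdjoint.neg_algebraMap_norm_le_self
  refine ⟨‖H‖ + 1, by positivity, ?_⟩
  have e : ((‖H‖ + 1 : ℝ) : ℂ) • 1 + H = H - -algebraMap ℝ (Matrix n n ℂ) ‖H‖ + 1 := by
    rw [sub_neg_eq_add, Algebra.algebraMap_eq_smul_one, ← Complex.coe_smul]
    push_cast
    module
  rw [e]
  exact (le_iff.mp h).add PosSemidef.one

section PartialTrace

variable {o i : Type*} [Fintype o]

theorem ptrFst_add (M N : Matrix (o × i) (o × i) ℂ) : ptrFst (M + N) = ptrFst M + ptrFst N := by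
  ext a b; simp [ptrFst, Finset.sum_add_distrib]

theorem ptrFst_sub (M N : Matrix (o × i) (o × i) ℂ) : ptrFst (M - N) = ptrFst M - ptrFst N := by
  ext a b; simp [ptrFst, Finset.sum_sub_distrib]

theorem ptrFst_smul (c : ℂ) (M : Matrix (o × i) (o × i) ℂ) : ptrFst (c • M) = c • ptrFst M := by
  ext a b; simp [ptrFst, Finset.mul_sum]

theorem ptrFst_conjTranspose (M : Matrix (o × i) (o × i) ℂ) : ptrFst Mᴴ = (ptrFst M)ᴴ := by
  ext a b; simp [ptrFst]

theorem ptrFst_one [DecidableEq o] [DecidableEq i] :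
    ptrFst (1 : Matrix (o × i) (o × i) ℂ) = (Fintype.card o : ℂ) • 1 := by
  ext a b
  by_cases h : a = b <;> simp [ptrFst, one_apply, h]

theorem ptrFst_single [DecidableEq o] [DecidableEq i] (k l : o) (a b : i) (c : ℂ) :
    ptrFst (single (k, a) (l, b) c) = if k = l then single a b c else 0 := by
  ext a' b'
  split_ifs with h
  · subst h; simp [ptrFst, single_apply, ite_and]
  · simp only [ptrFst, single_apply, of_apply, Prod.mk.injEq, Matrix.zero_apply]
    exact Finset.sum_eq_zero fun m _ => if_neg fun hm => h (hm.1.1.trans hm.2.1.symm)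

end PartialTrace

section Normalization

variable {o i : Type*} [Fintype o] [Fintype i] [DecidableEq i]
  {C : Matrix (o × i) (o × i) ℂ}

theorem trace_mul_eq_of_ptrFst_eq_smul_one
    (hC : ∀ E : Matrix (o × i) (o × i) ℂ, E.PosSemidef → ptrFst E = 1 → (C * E).trace = 1)
    {E : Matrix (o × i) (o × i) ℂ} (hE : E.PosSemidef) {r : ℝ} (hr : 0 < r)
    (hEr : ptrFst E = (r : ℂ) • 1) : (C * E).trace = r := by
  have hr' : (r : ℂ) ≠ 0 := by exact_mod_cast hr.ne'
  have h := hC ((r : ℂ)⁻¹ • E) (hE.smul (by positivity))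
    (by rw [ptrFst_smul, hEr, smul_smul, inv_mul_cancel₀ hr', one_smul])
  rw [Matrix.mul_smul, trace_smul, smul_eq_mul] at h
  rwa [inv_mul_eq_one₀ hr', eq_comm] at h

theorem trace_eq_card_of_trace_mul_eq_one [DecidableEq o] [Nonempty o]
    (hC : ∀ E : Matrix (o × i) (o × i) ℂ, E.PosSemidef → ptrFst E = 1 → (C * E).trace = 1) :
    C.trace = Fintype.card o := by
  simpa using trace_mul_eq_of_ptrFst_eq_smul_one hC PosSemidef.one
    (Nat.cast_pos.mpr Fintype.card_pos) (by rw [ptrFst_one, Complex.ofReal_natCast])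

theorem trace_mul_eq_zero_of_isHermitian [DecidableEq o] [Nonempty o]
    (hC : ∀ E : Matrix (o × i) (o × i) ℂ, E.PosSemidef → ptrFst E = 1 → (C * E).trace = 1)
    {H : Matrix (o × i) (o × i) ℂ} (hH : H.IsHermitian) (hH0 : ptrFst H = 0) :
    (C * H).trace = 0 := by
  obtain ⟨s, hs, hsH⟩ := hH.exists_pos_posSemidef_smul_one_add
  have h := trace_mul_eq_of_ptrFst_eq_smul_one hC hsH
    (mul_pos hs (Nat.cast_pos.mpr (Fintype.card_pos (α := o))))
    (by rw [ptrFst_add, ptrFst_smul, ptrFst_one, hH0, add_zero, smul_smul]; push_cast; rfl)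
  rw [mul_add, Matrix.mul_smul, mul_one, trace_add, trace_smul, smul_eq_mul,
    trace_eq_card_of_trace_mul_eq_one hC] at h
  push_cast at h
  linear_combination h

theorem trace_mul_eq_zero_of_ptrFst_eq_zero [DecidableEq o] [Nonempty o]
    (hC : ∀ E : Matrix (o × i) (o × i) ℂ, E.PosSemidef → ptrFst E = 1 → (C * E).trace = 1)
    {X : Matrix (o × i) (o × i) ℂ} (hX : ptrFst X = 0) : (C * X).trace = 0 := by
  have hXH : ptrFst Xᴴ = 0 := by rw [ptrFst_conjTranspose, hX, conjTranspose_zero]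
  have hre := trace_mul_eq_zero_of_isHermitian hC (isHermitian_add_transpose_self X)
    (by rw [ptrFst_add, hX, hXH, add_zero])
  have him := trace_mul_eq_zero_of_isHermitian hC (H := Complex.I • (X - Xᴴ))
    (by
      rw [IsHermitian, conjTranspose_smul, conjTranspose_sub, conjTranspose_conjTranspose,
        Complex.star_def, Complex.conj_I]
      module)
    (by rw [ptrFst_smul, ptrFst_sub, hX, hXH, sub_zero, smul_zero])
  rw [mul_add, trace_add] at hre
  rw [Matrix.mul_smul, mul_sub, trace_smul, trace_sub, smul_eq_mul] at him
  linear_combination (hre - Complex.I * him) / 2 +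
    ((C * X).trace - (C * Xᴴ).trace) / 2 * Complex.I_sq

theorem eq_one_kronecker_submatrix_of_trace_mul_eq_zero [DecidableEq o]
    (hker : ∀ X : Matrix (o × i) (o × i) ℂ, ptrFst X = 0 → (C * X).trace = 0) (k : o) :
    C = (1 : Matrix o o ℂ) ⊗ₖ C.submatrix (Prod.mk k) (Prod.mk k) := by
  ext ⟨l, a⟩ ⟨m, b⟩
  rw [kroneckerMap_apply, submatrix_apply]
  by_cases hlm : l = m
  · subst hlm
    have h := hker (single (l, b) (l, a) 1 - single (k, b) (k, a) 1)
      (by rw [ptrFst_sub, ptrFst_single, ptrFst_single, if_pos rfl, if_pos rfl, sub_self])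
    rw [mul_sub, trace_sub, trace_mul_single, trace_mul_single] at h
    simpa [sub_eq_zero] using h
  · have h := hker (single (m, b) (l, a) 1) (by rw [ptrFst_single, if_neg (Ne.symm hlm)])
    rw [trace_mul_single] at h
    simpa [hlm] using h

end Normalization

/-- If `Tr[C·E] = 1` for every channel Choi operator `E` (i.e. `E ≥ 0`,
`Tr_out[E] = I`), then `C = I ⊗ ρ` with `Tr[ρ] = 1`; if `C ≥ 0` then also `ρ ≥ 0`. -/
theorem normalization_lemma {i o : Type*} [Fintype i] [DecidableEq i]
    [Fintype o] [DecidableEq o] [Nonempty o]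
    (C : Matrix (o × i) (o × i) ℂ)
    (hC : ∀ E : Matrix (o × i) (o × i) ℂ, E.PosSemidef → ptrFst E = 1 →
      (C * E).trace = 1) :
    ∃ ρ : Matrix i i ℂ, ρ.trace = 1 ∧ C = (1 : Matrix o o ℂ) ⊗ₖ ρ ∧
      (C.PosSemidef → ρ.PosSemidef) := by
  obtain ⟨k⟩ := ‹Nonempty o›
  have hCρ := eq_one_kronecker_submatrix_of_trace_mul_eq_zero
    (fun _ => trace_mul_eq_zero_of_ptrFst_eq_zero hC) k
  refine ⟨_, ?_, hCρ, fun hC_psd => hC_psd.submatrix _⟩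
  have htr := trace_eq_card_of_trace_mul_eq_one hC
  rw [hCρ, trace_kronecker, trace_one] at htr
  exact mul_left_cancel₀ (Nat.cast_ne_zero.mpr Fintype.card_ne_zero) (htr.trans (mul_one _).symm)
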